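/- Let T and T_n be positive self-adjoint bounded operators on a Hilbert space and λ > 0. Then ‖(T + λI)^{1/2}(T_n + λI)^{-1/2}‖_op ≤ λ^{-1/2} ‖(T + λI)^{-1/2}(T_n − T)‖_op + 1. -/

import Mathlib

/-!
Write `a = T + λ` and `b = Tₙ + λ`. By the C*-identity,
`‖a^{1/2} b^{-1/2}‖² = ‖a^{1/2} b⁻¹ a^{1/2}‖`, and the resolvent identity
`b⁻¹ = a⁻¹ (a - b) b⁻¹ + a⁻¹` rewrites `a^{1/2} b⁻¹ a^{1/2}` as
`a^{-1/2} (a - b) b^{-1/2} · b^{-1/2} a^{1/2} + 1`. Hence `x = ‖a^{1/2} b^{-1/2}‖` satisfies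
`x² ≤ c x + 1` with `c = ‖a^{-1/2} (a - b)‖ ‖b^{-1/2}‖`, so `x ≤ c + 1`. Finally
`‖b^{-1/2}‖² = ‖b⁻¹‖ ≤ λ⁻¹` because `Tₙ ≥ 0`.
-/

open scoped RealInnerProductSpace

lemma le_add_one_of_mul_self_le {a b : ℝ} (hb : 0 ≤ b) (h : a * a ≤ b * a + 1) :
    a ≤ b + 1 := by
  nlinarith

section CStarRing

variable {A : Type*} [NormedRing A] [StarRing A] [CStarRing A]

lemma CStarRing.norm_one_le : ‖(1 : A)‖ ≤ 1 := by
  have h := CStarRing.norm_star_mul_self (x := (1 : A))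
  rw [star_one, one_mul] at h
  nlinarith [norm_nonneg (1 : A)]

lemma norm_mul_eq_of_star_mul_self_eq {x y : A} (h : star x * x = star y * y) (d : A) :
    ‖x * d‖ = ‖y * d‖ := by
  have hsq : star (x * d) * (x * d) = star (y * d) * (y * d) := by
    calc star (x * d) * (x * d) = star d * (star x * x) * d := by rw [star_mul]; noncomm_ring
      _ = star (y * d) * (y * d) := by rw [h, star_mul]; noncomm_ring
  rw [← mul_self_inj (norm_nonneg _) (norm_nonneg _), ← CStarRing.norm_star_mul_self,
    ← CStarRing.norm_star_mul_self, hsq]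

-- `p = a^{1/2}`, `s = a⁻¹`, `r = a^{-1/2}`, `q = b^{-1/2}`, `sn = b⁻¹`, `d = a - b`
lemma norm_mul_le_of_resolvent_eq {p q r s sn d : A} (hp : IsSelfAdjoint p)
    (hq : IsSelfAdjoint q) (hr : IsSelfAdjoint r) (hs : s * (p * p) = 1) (hs' : (p * p) * s = 1)
    (hr2 : r * r = s) (hq2 : q * q = sn) (hsn : sn = s * d * sn + s) :
    ‖p * q‖ ≤ ‖r * d‖ * ‖q‖ + 1 := by
  have hsp : p * s = s * p :=
    Commute.units_inv_right (u := ⟨p * p, s, hs', hs⟩) ((Commute.refl p).mul_right (.refl p))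
  have hpsp : p * s * p = 1 := by rw [hsp, mul_assoc, hs]
  have hs_sa : IsSelfAdjoint s := by rw [← hr2, IsSelfAdjoint, star_mul, hr.star_eq]
  -- `s * p = a^{-1/2}` as well, so it can be traded for `r`
  have hsp_sa : IsSelfAdjoint (s * p) := by
    rw [IsSelfAdjoint, star_mul, hp.star_eq, hs_sa.star_eq, hsp]
  have hsp_sq : star (s * p) * (s * p) = star r * r := by
    rw [hsp_sa.star_eq, hr.star_eq, hr2, mul_assoc, ← mul_assoc p, hpsp, mul_one]
  have hdecomp : p * q * star (p * q) = (s * p * d * q) * (q * p) + 1 := by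
    calc p * q * star (p * q) = p * (s * d * sn + s) * p := by
          rw [star_mul, hp.star_eq, hq.star_eq, ← hsn, ← hq2]; noncomm_ring
      _ = (p * s) * d * (q * q) * p + p * s * p := by rw [hq2]; noncomm_ring
      _ = (s * p * d * q) * (q * p) + 1 := by rw [hpsp, hsp]; noncomm_ring
  have hqp : ‖q * p‖ = ‖p * q‖ := by
    rw [← norm_star (p * q), star_mul, hp.star_eq, hq.star_eq]
  refine le_add_one_of_mul_self_le (by positivity) ?_
  calc ‖p * q‖ * ‖p * q‖ = ‖(s * p * d * q) * (q * p) + 1‖ := by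
        rw [← CStarRing.norm_self_mul_star, hdecomp]
    _ ≤ ‖s * p * d‖ * ‖q‖ * ‖q * p‖ + ‖(1 : A)‖ := by
        grw [norm_add_le, norm_mul_le, norm_mul_le]
    _ ≤ ‖r * d‖ * ‖q‖ * ‖p * q‖ + 1 := by
        rw [norm_mul_eq_of_star_mul_self_eq hsp_sq, hqp]
        gcongr
        exact CStarRing.norm_one_le

end CStarRing

lemma IsSelfAdjoint.norm_le_inv_sqrt {A : Type*} [NormedRing A] [StarRing A] [CStarRing A]
    {q : A} (hq : IsSelfAdjoint q) {c : ℝ} (h : ‖q * q‖ ≤ c⁻¹) :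
    ‖q‖ ≤ 1 / Real.sqrt c := by
  rw [one_div, ← Real.sqrt_inv]
  exact Real.le_sqrt_of_sq_le (hq.norm_mul_self ▸ h)

section InnerProductSpace

variable {H : Type*} [NormedAddCommGroup H] [InnerProductSpace ℝ H]

lemma mul_norm_le_norm_add_smul_apply {T : H →L[ℝ] H} (hT : ∀ x : H, 0 ≤ ⟪T x, x⟫)
    (lam : ℝ) (y : H) : lam * ‖y‖ ≤ ‖(T + lam • 1) y‖ := by
  have h : lam * (‖y‖ * ‖y‖) ≤ ‖(T + lam • 1) y‖ * ‖y‖ :=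
    calc lam * (‖y‖ * ‖y‖) ≤ ⟪(T + lam • 1) y, y⟫ := by
          simp only [add_apply, smul_apply, one_apply_eq_self, inner_add_left,
            real_inner_smul_left, real_inner_self_eq_norm_mul_norm]
          linarith [hT y]
      _ ≤ ‖(T + lam • 1) y‖ * ‖y‖ := real_inner_le_norm _ _
  rcases (norm_nonneg y).eq_or_lt with hy | hy
  · rw [← hy, mul_zero]; positivity
  · rw [← mul_assoc] at h; exact le_of_mul_le_mul_right h hy

lemma norm_le_inv_of_add_smul_mul_eq_one {T Tinv : H →L[ℝ] H} (hT : ∀ x : H, 0 ≤ ⟪T x, x⟫)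
    {lam : ℝ} (hlam : 0 < lam) (h : (T + lam • 1) * Tinv = 1) : ‖Tinv‖ ≤ lam⁻¹ := by
  refine ContinuousLinearMap.opNorm_le_bound _ (by positivity) fun x => ?_
  rw [inv_mul_eq_div, le_div_iff₀' hlam]
  simpa [← mul_apply_eq_comp, h] using
    mul_norm_le_norm_add_smul_apply hT lam (Tinv x)

end InnerProductSpace

lemma resolvent_eq_mul_sub_mul_add {R : Type*} [Ring R] {a b s t : R} (hs : s * a = 1)
    (ht : b * t = 1) : t = s * (a - b) * t + s := by
  rw [mul_sub, sub_mul, mul_assoc s b, ht, hs, one_mul, mul_one, sub_add_cancel]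

theorem stmt7_general {H : Type*} [NormedAddCommGroup H] [InnerProductSpace ℝ H] [CompleteSpace H]
    (T Tn S Sn P Qn R : H →L[ℝ] H)
    (hTnpos : ∀ x : H, 0 ≤ ⟪Tn x, x⟫)
    (lam : ℝ) (hlam : 0 < lam)
    (hS₁ : S * (T + lam • 1) = 1) (hS₂ : (T + lam • 1) * S = 1)
    (hSn₂ : (Tn + lam • 1) * Sn = 1)
    (hP : IsSelfAdjoint P) (hP2 : P * P = T + lam • 1)
    (hQn : IsSelfAdjoint Qn) (hQn2 : Qn * Qn = Sn)
    (hR : IsSelfAdjoint R) (hRS : R * R = S) :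
    ‖P * Qn‖ ≤ ‖R * (Tn - T)‖ / Real.sqrt lam + 1 := by
  have hQn_le : ‖Qn‖ ≤ 1 / Real.sqrt lam :=
    hQn.norm_le_inv_sqrt (hQn2 ▸ norm_le_inv_of_add_smul_mul_eq_one hTnpos hlam hSn₂)
  have hSn : Sn = S * (P * P - (Tn + lam • 1)) * Sn + S :=
    hP2 ▸ resolvent_eq_mul_sub_mul_add hS₁ hSn₂
  have hdiff : P * P - (Tn + lam • 1) = -(Tn - T) := by rw [hP2]; abel
  calc ‖P * Qn‖ ≤ ‖R * (P * P - (Tn + lam • 1))‖ * ‖Qn‖ + 1 :=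
        norm_mul_le_of_resolvent_eq hP hQn hR (hP2 ▸ hS₁) (hP2 ▸ hS₂) hRS hQn2 hSn
    _ ≤ ‖R * (Tn - T)‖ * (1 / Real.sqrt lam) + 1 := by
        rw [hdiff, mul_neg, norm_neg]; gcongr
    _ = ‖R * (Tn - T)‖ / Real.sqrt lam + 1 := by rw [mul_one_div]

/-- For positive self-adjoint bounded operators `T, Tₙ` on a Hilbert space and `λ > 0`,
with `P = (T + λI)^{1/2}`, `Qₙ = (Tₙ + λI)^{-1/2}` and `R = (T + λI)^{-1/2}`:
`‖(T + λI)^{1/2}(Tₙ + λI)^{-1/2}‖ ≤ λ^{-1/2} ‖(T + λI)^{-1/2}(Tₙ − T)‖ + 1`. -/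
theorem stmt7 {H : Type*} [NormedAddCommGroup H] [InnerProductSpace ℝ H] [CompleteSpace H]
    (T Tn S Sn P Qn R : H →L[ℝ] H)
    (hT : IsSelfAdjoint T) (hTpos : ∀ x : H, 0 ≤ ⟪T x, x⟫)
    (hTn : IsSelfAdjoint Tn) (hTnpos : ∀ x : H, 0 ≤ ⟪Tn x, x⟫)
    (lam : ℝ) (hlam : 0 < lam)
    (hS₁ : S * (T + lam • 1) = 1) (hS₂ : (T + lam • 1) * S = 1)
    (hSn₁ : Sn * (Tn + lam • 1) = 1) (hSn₂ : (Tn + lam • 1) * Sn = 1)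
    (hP : IsSelfAdjoint P) (hPpos : ∀ x : H, 0 ≤ ⟪P x, x⟫) (hP2 : P * P = T + lam • 1)
    (hQn : IsSelfAdjoint Qn) (hQnpos : ∀ x : H, 0 ≤ ⟪Qn x, x⟫) (hQn2 : Qn * Qn = Sn)
    (hR : IsSelfAdjoint R) (hRpos : ∀ x : H, 0 ≤ ⟪R x, x⟫) (hRS : R * R = S) :
    ‖P * Qn‖ ≤ ‖R * (Tn - T)‖ / Real.sqrt lam + 1 :=
  stmt7_general T Tn S Sn P Qn R hTnpos lam hlam hS₁ hS₂ hSn₂ hP hP2 hQn hQn2 hR hRS
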